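/- On L²([0,1]^d), the operators (𝐈 − 𝐏)𝐓*𝐓(𝐈 − 𝐏)𝐓*𝐓(𝐈 − 𝐏) (the covariance operator of the centered right-integrated pinned Brownian sheet) and 𝐓*(𝐈 − 𝐏)𝐓𝐓*(𝐈 − 𝐏)𝐓 (the covariance operator of the right-integrated centered Brownian sheet) have the same nonzero eigenvalues with multiplicities. -/

import Mathlib

/-!
For bounded operators `X, Y` and `λ ≠ 0`, `Y` maps `ker (XY - λ)^m` injectively into
`ker (YX - λ)^m`, so `XY` and `YX` have the same nonzero eigenvalues with multiplicities.
With `Q = 𝐈 - 𝐏` idempotent, the first operator `Q𝐓*𝐓Q𝐓*𝐓Q` is thereby equivalent to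
`𝐓*𝐓Q𝐓*𝐓Q` and then to `𝐓Q𝐓*𝐓Q𝐓*`. The reflection `x ↦ 1 - x` of the cube induces a unitary
involution `J` of `L²` with `J𝐓J = 𝐓*` and `J𝐏J = 𝐏`, so `𝐓Q𝐓*𝐓Q𝐓* = J(𝐓*Q𝐓𝐓*Q𝐓)J`,
which is equivalent to `𝐓*Q𝐓𝐓*Q𝐓`.
-/

open MeasureTheory

noncomputable section

/-- Lebesgue measure on the cube `[0,1]^d`, as a measure on `ℝ^d`. -/
def cubeMeasure (d : ℕ) : Measure (Fin d → ℝ) :=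
  Measure.pi fun _ => volume.restrict (Set.Icc (0:ℝ) 1)

/-- `A` and `B` have the same nonzero eigenvalues with multiplicities. -/
def SameNonzeroEigenvalues {H : Type*} [NormedAddCommGroup H] [NormedSpace ℂ H]
    (A B : H →L[ℂ] H) : Prop :=
  ∀ l : ℂ, l ≠ 0 → ∀ m : ℕ, 1 ≤ m →
    Module.rank ℂ (LinearMap.ker (((A - l • 1) ^ m : H →L[ℂ] H) : H →ₗ[ℂ] H)) =
    Module.rank ℂ (LinearMap.ker (((B - l • 1) ^ m : H →L[ℂ] H) : H →ₗ[ℂ] H))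

section Jacobson

variable {K M : Type*} [Field K] [AddCommGroup M] [Module K M]

theorem Module.End.rank_ker_pow_mul_sub_smul_le (X Y : Module.End K M) {l : K} (hl : l ≠ 0)
    (m : ℕ) :
    Module.rank K (LinearMap.ker ((X * Y - l • 1) ^ m)) ≤
      Module.rank K (LinearMap.ker ((Y * X - l • 1) ^ m)) := by
  set c := X * Y - l • 1
  set c' := Y * X - l • 1
  have hsemi : SemiconjBy Y c c' := by
    simp only [SemiconjBy, c, c', mul_sub, sub_mul, mul_smul_comm, smul_mul_assoc, mul_one,
      one_mul, mul_assoc]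
  have hmaps : ∀ v ∈ LinearMap.ker (c ^ m), Y v ∈ LinearMap.ker (c' ^ m) := fun v hv => by
    rw [LinearMap.mem_ker] at hv ⊢
    rw [← Module.End.mul_apply, ← (hsemi.pow_right m).eq, Module.End.mul_apply, hv, map_zero]
  refine LinearMap.rank_le_of_injective (Y.restrict hmaps) fun v w hvw => ?_
  -- On `ker Y` the operator `c` acts as `-l`, which is invertible.
  have hpow : ∀ u ∈ LinearMap.ker Y, ∀ k : ℕ, (c ^ k) u = (-l) ^ k • u := by
    intro u hu k
    induction k with
    | zero => simp
    | succ k ih =>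
      rw [pow_succ', Module.End.mul_apply, ih, map_smul, pow_succ', mul_smul]
      simp [c, LinearMap.mem_ker.mp hu, smul_comm l]
  have hker : (v : M) - w ∈ LinearMap.ker Y := by
    rw [LinearMap.mem_ker, map_sub, sub_eq_zero]
    exact congrArg Subtype.val hvw
  have hzero : (-l) ^ m • ((v : M) - w) = 0 := by
    rw [← hpow _ hker m]
    exact sub_mem v.2 w.2
  exact Subtype.ext <| sub_eq_zero.mp <|
    (smul_eq_zero.mp hzero).resolve_left (pow_ne_zero _ (neg_ne_zero.mpr hl))

end Jacobson

section SameNonzeroEigenvalues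

variable {H : Type*} [NormedAddCommGroup H] [NormedSpace ℂ H]

theorem sameNonzeroEigenvalues_mul_comm (X Y : H →L[ℂ] H) :
    SameNonzeroEigenvalues (X * Y) (Y * X) := by
  intro l hl m _
  rw [ContinuousLinearMap.toLinearMap_pow, ContinuousLinearMap.toLinearMap_pow,
    ContinuousLinearMap.toLinearMap_sub, ContinuousLinearMap.toLinearMap_sub,
    ContinuousLinearMap.toLinearMap_mul, ContinuousLinearMap.toLinearMap_mul,
    ContinuousLinearMap.toLinearMap_smul, ContinuousLinearMap.toLinearMap_one]
  exact le_antisymm (Module.End.rank_ker_pow_mul_sub_smul_le _ _ hl m)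
    (Module.End.rank_ker_pow_mul_sub_smul_le _ _ hl m)

theorem SameNonzeroEigenvalues.trans {A B C : H →L[ℂ] H} (hAB : SameNonzeroEigenvalues A B)
    (hBC : SameNonzeroEigenvalues B C) : SameNonzeroEigenvalues A C :=
  fun l hl m hm => (hAB l hl m hm).trans (hBC l hl m hm)

instance : @Trans (H →L[ℂ] H) (H →L[ℂ] H) (H →L[ℂ] H)
    SameNonzeroEigenvalues SameNonzeroEigenvalues SameNonzeroEigenvalues :=
  ⟨SameNonzeroEigenvalues.trans⟩

local infix:50 " ∼ " => SameNonzeroEigenvalues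

theorem sameNonzeroEigenvalues_of_conj (T T' P J : H →L[ℂ] H) (hP : IsIdempotentElem P)
    (hJ : J * J = 1) (hJP : J * P * J = P) (hJT : J * T * J = T') :
    SameNonzeroEigenvalues ((1 - P) * T' * T * (1 - P) * T' * T * (1 - P))
      (T' * (1 - P) * T * T' * (1 - P) * T) := by
  have hJJ : ∀ X, J * (J * X) = X := fun X => by rw [← mul_assoc, hJ, one_mul]
  have hconj : ∀ X Y, J * (X * Y) * J = (J * X * J) * (J * Y * J) := fun X Y => by
    simp only [mul_assoc, hJJ]
  have hJT' : J * T' * J = T := by rw [← hJT]; simp only [mul_assoc, hJJ, hJ, mul_one]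
  have hJQ : J * (1 - P) * J = 1 - P := by rw [mul_sub, sub_mul, mul_one, hJ, hJP]
  set Q := 1 - P
  have hQ : Q * Q = Q := hP.one_sub.eq
  calc (1 - P) * T' * T * (1 - P) * T' * T * (1 - P)
      = Q * (T' * T * Q * T' * T * Q) := by simp only [Q, mul_assoc]
    _ ∼ (T' * T * Q * T' * T * Q) * Q := sameNonzeroEigenvalues_mul_comm _ _
    _ = T' * (T * Q * T' * T * Q) := by simp only [mul_assoc, hQ]
    _ ∼ (T * Q * T' * T * Q) * T' := sameNonzeroEigenvalues_mul_comm _ _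
    _ = (J * (T' * Q * T * T' * Q * T)) * J := by
      rw [hconj, hconj, hconj, hconj, hconj, hJT, hJT', hJQ]
    _ ∼ J * (J * (T' * Q * T * T' * Q * T)) := sameNonzeroEigenvalues_mul_comm _ _
    _ = T' * (1 - P) * T * T' * (1 - P) * T := hJJ _

end SameNonzeroEigenvalues

section CompositionOperator

variable {α 𝕜 E : Type*} [MeasurableSpace α] {μ : Measure α} [NormedField 𝕜]
  [NormedAddCommGroup E] [NormedSpace 𝕜 E] {p : ENNReal} [Fact (1 ≤ p)] {e : α → α}
  {J : Lp E p μ →L[𝕜] Lp E p μ}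

theorem conj_eq_of_ae_comp (hJ : ∀ u, J u =ᵐ[μ] u ∘ e) {S S' : Lp E p μ →L[𝕜] Lp E p μ}
    (h : ∀ u, ∀ᵐ x ∂μ, S (J u) (e x) = S' u x) : J * S * J = S' := by
  ext1 u
  apply Lp.ext
  filter_upwards [hJ (S (J u)), h u] with x hJx hx
  rw [mul_apply_eq_comp, mul_apply_eq_comp, hJx, Function.comp_apply, hx]

theorem mul_self_eq_one_of_ae_comp (he : Measure.QuasiMeasurePreserving e μ μ)
    (he' : Function.Involutive e) (hJ : ∀ u, J u =ᵐ[μ] u ∘ e) : J * J = 1 := by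
  ext1 u
  apply Lp.ext
  filter_upwards [hJ (J u), he.ae (hJ u)] with x hJx hJex
  rw [mul_apply_eq_comp, one_apply_eq_self, hJx, Function.comp_apply,
    hJex, Function.comp_apply, he' x]

variable [NormedSpace ℝ E] {P : Lp E p μ →L[𝕜] Lp E p μ}

theorem isIdempotentElem_of_ae_eq_integral [CompleteSpace E] [IsProbabilityMeasure μ]
    (hP : ∀ u, ∀ᵐ x ∂μ, P u x = ∫ y, u y ∂μ) : IsIdempotentElem P := by
  ext1 u
  apply Lp.ext
  have hPu : ∫ y, P u y ∂μ = ∫ y, u y ∂μ := by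
    rw [integral_congr_ae (hP u), integral_const, probReal_univ, one_smul]
  filter_upwards [hP (P u), hP u] with x hPPx hPx
  rw [mul_apply_eq_comp, hPPx, hPu, hPx]

theorem conj_eq_of_ae_eq_integral (he : MeasurePreserving e μ μ) (he' : MeasurableEmbedding e)
    (hJ : ∀ u, J u =ᵐ[μ] u ∘ e) (hP : ∀ u, ∀ᵐ x ∂μ, P u x = ∫ y, u y ∂μ) : J * P * J = P :=
  conj_eq_of_ae_comp hJ fun u => by
    have hJu : ∫ y, J u y ∂μ = ∫ y, u y ∂μ :=
      (integral_congr_ae (hJ u)).trans (he.integral_comp he' _)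
    filter_upwards [he.quasiMeasurePreserving.ae (hP (J u)), hP u] with x hPJx hPx
    rw [hPJx, hPx, hJu]

end CompositionOperator

theorem measurePreserving_one_sub_restrict_Icc :
    MeasurePreserving (fun x : ℝ => 1 - x) (volume.restrict (Set.Icc 0 1))
      (volume.restrict (Set.Icc 0 1)) := by
  have hpre : (fun x : ℝ => 1 - x) ⁻¹' Set.Icc 0 1 = Set.Icc 0 1 := by
    ext x
    simp only [Set.mem_preimage, Set.mem_Icc]
    constructor <;> rintro ⟨h₀, h₁⟩ <;> constructor <;> linarith
  simpa only [hpre] using (Measure.measurePreserving_sub_left volume (1 : ℝ)).restrict_preimage_emb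
    (MeasurableEquiv.subLeft (1 : ℝ)).measurableEmbedding (Set.Icc 0 1)

instance (d : ℕ) : IsProbabilityMeasure (cubeMeasure d) :=
  have : IsProbabilityMeasure (volume.restrict (Set.Icc (0 : ℝ) 1)) :=
    ⟨by simp [Real.volume_Icc]⟩
  inferInstanceAs (IsProbabilityMeasure (Measure.pi _))

def cubeFlip (d : ℕ) : (Fin d → ℝ) ≃ᵐ (Fin d → ℝ) :=
  MeasurableEquiv.piCongrRight fun _ => MeasurableEquiv.subLeft 1

theorem cubeFlip_involutive (d : ℕ) : Function.Involutive (cubeFlip d) :=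
  fun x => funext fun i => sub_sub_cancel 1 (x i)

theorem measurePreserving_cubeFlip (d : ℕ) :
    MeasurePreserving (cubeFlip d) (cubeMeasure d) (cubeMeasure d) :=
  measurePreserving_pi _ _ fun _ => measurePreserving_one_sub_restrict_Icc

theorem cubeFlip_preimage_Icc {d : ℕ} (x : Fin d → ℝ) :
    cubeFlip d ⁻¹' Set.Icc x 1 = Set.Icc 0 (cubeFlip d x) := by
  ext y
  simp only [Set.mem_preimage, Set.mem_Icc, Pi.le_def, Pi.zero_apply, Pi.one_apply]
  change ((∀ i, x i ≤ 1 - y i) ∧ ∀ i, 1 - y i ≤ 1) ↔ (∀ i, 0 ≤ y i) ∧ ∀ i, y i ≤ 1 - x i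
  constructor <;> rintro ⟨h₀, h₁⟩ <;>
    exact ⟨fun i => by linarith [h₀ i, h₁ i], fun i => by linarith [h₀ i, h₁ i]⟩

theorem conj_cubeFlip_eq {d : ℕ} {E 𝕜 : Type*} [NormedField 𝕜] [NormedAddCommGroup E]
    [NormedSpace 𝕜 E] [NormedSpace ℝ E] {p : ENNReal} [Fact (1 ≤ p)]
    {J T Tstar : Lp E p (cubeMeasure d) →L[𝕜] Lp E p (cubeMeasure d)}
    (hJ : ∀ u, J u =ᵐ[cubeMeasure d] u ∘ cubeFlip d)
    (hT : ∀ u, ∀ᵐ x ∂cubeMeasure d, T u x = ∫ y in Set.Icc 0 x, u y ∂cubeMeasure d)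
    (hTstar : ∀ u, ∀ᵐ x ∂cubeMeasure d, Tstar u x = ∫ y in Set.Icc x 1, u y ∂cubeMeasure d) :
    J * T * J = Tstar :=
  conj_eq_of_ae_comp hJ fun u => by
    have he := measurePreserving_cubeFlip d
    filter_upwards [he.quasiMeasurePreserving.ae (hT (J u)), hTstar u] with x hTx hTstarx
    rw [hTx, hTstarx, integral_congr_ae (ae_restrict_of_ae (hJ u)), ← cubeFlip_preimage_Icc]
    exact he.setIntegral_preimage_emb (cubeFlip d).measurableEmbedding _ _

theorem statement17_general (d : ℕ)
    (T Tstar P : Lp ℂ 2 (cubeMeasure d) →L[ℂ] Lp ℂ 2 (cubeMeasure d))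
    (hT : ∀ u : Lp ℂ 2 (cubeMeasure d), ∀ᵐ x ∂(cubeMeasure d),
      T u x = ∫ y in Set.Icc 0 x, u y ∂(cubeMeasure d))
    (hTstar : ∀ u : Lp ℂ 2 (cubeMeasure d), ∀ᵐ x ∂(cubeMeasure d),
      Tstar u x = ∫ y in Set.Icc x 1, u y ∂(cubeMeasure d))
    (hP : ∀ u : Lp ℂ 2 (cubeMeasure d), ∀ᵐ x ∂(cubeMeasure d),
      P u x = ∫ y, u y ∂(cubeMeasure d)) :
    SameNonzeroEigenvalues
      ((1 - P) * Tstar * T * (1 - P) * Tstar * T * (1 - P))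
      (Tstar * (1 - P) * T * Tstar * (1 - P) * T) := by
  have he := measurePreserving_cubeFlip d
  let J := (Lp.compMeasurePreservingₗᵢ (E := ℂ) (p := 2) ℂ (cubeFlip d) he).toContinuousLinearMap
  have hJ : ∀ u, J u =ᵐ[cubeMeasure d] u ∘ cubeFlip d :=
    fun u => Lp.coeFn_compMeasurePreserving u he
  exact sameNonzeroEigenvalues_of_conj T Tstar P J (isIdempotentElem_of_ae_eq_integral hP)
    (mul_self_eq_one_of_ae_comp he.quasiMeasurePreserving (cubeFlip_involutive d) hJ)
    (conj_eq_of_ae_eq_integral he (cubeFlip d).measurableEmbedding hJ hP)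
    (conj_cubeFlip_eq hJ hT hTstar)

/-- On `L²([0,1]^d)`, the operators `(𝐈-𝐏)𝐓*𝐓(𝐈-𝐏)𝐓*𝐓(𝐈-𝐏)` (covariance of the
centered right-integrated pinned Brownian sheet) and `𝐓*(𝐈-𝐏)𝐓𝐓*(𝐈-𝐏)𝐓` (covariance
of the right-integrated centered Brownian sheet) have the same nonzero eigenvalues with
multiplicities. -/
theorem statement17 (d : ℕ) (hd : 1 ≤ d)
    (T Tstar P : Lp ℂ 2 (cubeMeasure d) →L[ℂ] Lp ℂ 2 (cubeMeasure d))
    (hT : ∀ u : Lp ℂ 2 (cubeMeasure d), ∀ᵐ x ∂(cubeMeasure d),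
      T u x = ∫ y in Set.Icc 0 x, u y ∂(cubeMeasure d))
    (hTstar : ∀ u : Lp ℂ 2 (cubeMeasure d), ∀ᵐ x ∂(cubeMeasure d),
      Tstar u x = ∫ y in Set.Icc x 1, u y ∂(cubeMeasure d))
    (hP : ∀ u : Lp ℂ 2 (cubeMeasure d), ∀ᵐ x ∂(cubeMeasure d),
      P u x = ∫ y, u y ∂(cubeMeasure d)) :
    SameNonzeroEigenvalues
      ((1 - P) * Tstar * T * (1 - P) * Tstar * T * (1 - P))
      (Tstar * (1 - P) * T * Tstar * (1 - P) * T) :=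
  statement17_general d T Tstar P hT hTstar hP
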